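/- The collection E := {Y ⊆ κ : there exists A ∈ D such that S_A ⊆ Y} is a κ-complete nonprincipal ultrafilter on κ, and every member of E has cardinality κ. -/

import Mathlib

open Set

/-- A normal ultrafilter on the set of ordinals below `κ.ord`. -/
structure NormalUltrafilterOn (κ : Cardinal.{0}) where
  sets : Set (Set Ordinal)
  mem_subset : ∀ A ∈ sets, A ⊆ Set.Iio κ.ord
  univ_mem : Set.Iio κ.ord ∈ sets
  empty_not_mem : ∅ ∉ sets
  superset_mem : ∀ A B : Set Ordinal, A ∈ sets → A ⊆ B → B ⊆ Set.Iio κ.ord → B ∈ sets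
  ultra : ∀ A : Set Ordinal, A ⊆ Set.Iio κ.ord → A ∈ sets ∨ (Set.Iio κ.ord \ A) ∈ sets
  complete : ∀ S : Set (Set Ordinal), S ⊆ sets → S.Nonempty →
    Cardinal.mk S < Cardinal.lift.{1} κ → ⋂₀ S ∈ sets
  nonprincipal : ∀ α : Ordinal, (Set.Iio κ.ord \ {α}) ∈ sets
  normal : ∀ f : Ordinal → Ordinal, ∀ A ∈ sets, (∀ α ∈ A, f α < α) →
    ∃ B ∈ sets, ∃ γ : Ordinal, ∀ α ∈ B, f α = γ

/-- `Fseq A i α` is `F(i,α)`: the `α`-th element, in increasing order, of the set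
`A i \ ⋃ j < i, A j`. -/
noncomputable def Fseq (A : Ordinal → Set Ordinal) (i α : Ordinal) : Ordinal :=
  Ordinal.enumOrd (A i \ ⋃ j < i, A j) α

/-- `Sset A C` is `S_C = {F(i,α) : i < α and i, α ∈ C}`. -/
def Sset (A : Ordinal → Set Ordinal) (C : Set Ordinal) : Set Ordinal :=
  {β | ∃ i α, i ∈ C ∧ α ∈ C ∧ i < α ∧ Fseq A i α = β}

/-- `Eset κ D A` is `E = {Y ⊆ κ : there exists C ∈ D such that S_C ⊆ Y}`. -/
def Eset (κ : Cardinal.{0}) (D : NormalUltrafilterOn κ) (A : Ordinal → Set Ordinal) :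
    Set (Set Ordinal) :=
  {Y | Y ⊆ Set.Iio κ.ord ∧ ∃ C ∈ D.sets, Sset A C ⊆ Y}

/-!
Completeness of `D` makes `κ` regular, so every `A i \ ⋃ j < i, A j` still has size `κ`
and `F(i, ·)` is strictly increasing on `κ`. For `i ∈ C ∈ D`, `S_C` then contains the injective
image under `F(i, ·)` of the `D`-large set `C \ (i + 1)`, so every member of `E` has size `κ`.
For the ultrafilter property put `Y_i = {α < κ : F(i, α) ∈ Y}`: `D` decides, for `D`-many `i`
simultaneously, whether `Y_i` or its complement lies in `D`, and intersecting with the diagonal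
intersection of the chosen sets (in `D` by normality) gives `C ∈ D` with `S_C ⊆ Y` or
`S_C ⊆ κ \ Y`. Completeness of `E` is inherited from `D` because `S_C` is monotone in `C`.
-/

open Cardinal Order

universe u

theorem Cardinal.mk_iUnion_lt_of_isRegular {α ι : Type u} {c : Cardinal} (hc : c.IsRegular)
    {t : ι → Set α} (hι : #ι < c) (ht : ∀ i, #(t i) < c) : #(⋃ i, t i) < c :=
  (mk_iUnion_le t).trans_lt <|
    mul_lt_of_lt hc.aleph0_le hι (iSup_lt_of_lt_cof_ord (by rwa [hc.cof_ord]) ht)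

section OrdinalsBelow

variable {κ : Cardinal.{0}}

theorem mk_Iio_lt_lift_of_lt_ord {o : Ordinal} (ho : o < κ.ord) : #(Iio o) < lift.{1} κ := by
  rwa [mk_Iio_ordinal, lift_lt, ← lt_ord]

theorem mk_le_lift_of_subset_Iio_ord {X : Set Ordinal} (hX : X ⊆ Iio κ.ord) :
    #X ≤ lift.{1} κ :=
  (mk_le_mk_of_subset hX).trans_eq (by rw [mk_Iio_ordinal, card_ord])

theorem mk_biUnion_lt_of_isRegular (hκ : κ.IsRegular) {o : Ordinal} (ho : o < κ.ord)
    {t : Ordinal → Set Ordinal} (ht : ∀ j < o, #(t j) < lift.{1} κ) :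
    #(⋃ j < o, t j) < lift.{1} κ := by
  change #(⋃ j ∈ Iio o, t j) < _
  rw [biUnion_eq_iUnion]
  exact mk_iUnion_lt_of_isRegular hκ.lift (mk_Iio_lt_lift_of_lt_ord ho) fun j => ht j j.2

theorem mk_Iic_lt_lift_of_lt_ord (hκ : ℵ₀ ≤ κ) {o : Ordinal} (ho : o < κ.ord) :
    #(Iic o) < lift.{1} κ := by
  rw [← Iio_succ]
  exact mk_Iio_lt_lift_of_lt_ord ((isSuccLimit_ord hκ).succ_lt ho)

open Ordinal in
theorem enumOrd_lt_of_subset_Iio {s : Set Ordinal} {o : Ordinal} (ho : 0 < o) (hs : s ⊆ Iio o)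
    (a : Ordinal) : enumOrd s a < o := by
  rw [enumOrd]
  rcases (s ∩ {b | ∀ c < a, enumOrd s c < b}).eq_empty_or_nonempty with h | h
  · rwa [h, Ordinal.sInf_empty]
  · exact hs (csInf_mem h).1

open Ordinal in
theorem strictMonoOn_enumOrd_of_mk_eq {s : Set Ordinal} (hκ : κ.IsRegular) (hs : s ⊆ Iio κ.ord)
    (hcard : #s = lift.{1} κ) : StrictMonoOn (enumOrd s) (Iio κ.ord) := by
  intro b _ a ha hba
  have hsmall : #(⋃ b < a, Iic (enumOrd s b)) < lift.{1} κ :=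
    mk_biUnion_lt_of_isRegular hκ ha fun b _ =>
      mk_Iic_lt_lift_of_lt_ord hκ.aleph0_le (enumOrd_lt_of_subset_Iio hκ.ord_pos hs b)
  obtain ⟨c, hcs, hc⟩ : (s \ ⋃ b < a, Iic (enumOrd s b)).Nonempty :=
    sdiff_nonempty.2 fun hsub => (mk_le_mk_of_subset hsub).not_gt (hcard ▸ hsmall)
  have hne : (s ∩ {c | ∀ b < a, enumOrd s b < c}).Nonempty :=
    ⟨c, hcs, fun b hb => not_le.1 fun hcb => hc (mem_biUnion hb hcb)⟩
  have hmem := csInf_mem hne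
  rw [← enumOrd] at hmem
  exact hmem.2 b hba

theorem mk_diff_biUnion_eq (hκ : κ.IsRegular) {o : Ordinal} (ho : o < κ.ord)
    {X : Set Ordinal} {t : Ordinal → Set Ordinal} (hX : #X = lift.{1} κ)
    (ht : ∀ j < o, #(X ∩ t j : Set Ordinal) < lift.{1} κ) :
    #(X \ ⋃ j < o, t j : Set Ordinal) = lift.{1} κ := by
  refine (hX ▸ mk_le_mk_of_subset sdiff_subset).antisymm (not_lt.1 fun hlt => ?_)
  have hsmall : #(X ∩ ⋃ j < o, t j : Set Ordinal) < lift.{1} κ := by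
    rw [inter_iUnion₂]
    exact mk_biUnion_lt_of_isRegular hκ ho ht
  have := (mk_union_le _ _).trans_lt (add_lt_of_lt hκ.lift.aleph0_le hlt hsmall)
  rw [sdiff_union_inter, hX] at this
  exact this.false

def diagInter (o : Ordinal) (g : Ordinal → Set Ordinal) : Set Ordinal :=
  {α | α < o ∧ ∀ i < α, α ∈ g i}

end OrdinalsBelow

namespace NormalUltrafilterOn

variable {κ : Cardinal.{0}} (D : NormalUltrafilterOn κ)

theorem nonempty_of_mem {X : Set Ordinal} (hX : X ∈ D.sets) : X.Nonempty :=
  nonempty_iff_ne_empty.2 fun h => D.empty_not_mem (h ▸ hX)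

theorem inter_mem (hκ : ℵ₀ < κ) {X Y : Set Ordinal} (hX : X ∈ D.sets) (hY : Y ∈ D.sets) :
    X ∩ Y ∈ D.sets := by
  rw [← sInter_pair]
  exact D.complete _ (pair_subset hX hY) (insert_nonempty _ _)
    ((toFinite _).lt_aleph0.trans_le (aleph0_le_lift.2 hκ.le))

theorem iInter_mem {ι : Type 1} [Nonempty ι] {g : ι → Set Ordinal} (hι : #ι < lift.{1} κ)
    (hg : ∀ i, g i ∈ D.sets) : ⋂ i, g i ∈ D.sets := by
  rw [← sInter_range]
  exact D.complete _ (range_subset_iff.2 hg) (range_nonempty g) (mk_range_le.trans_lt hι)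

theorem Iio_diff_mem {X : Set Ordinal} (hX : #X < lift.{1} κ) : Iio κ.ord \ X ∈ D.sets := by
  rcases X.eq_empty_or_nonempty with rfl | hne
  · simpa using D.univ_mem
  have : Nonempty X := hne.to_subtype
  convert D.iInter_mem hX fun β : X => D.nonprincipal β
  ext α
  simp only [mem_sdiff, mem_iInter, mem_singleton_iff, Subtype.forall]
  exact ⟨fun h β hβ => ⟨h.1, fun hαβ => h.2 (hαβ ▸ hβ)⟩,
    fun h => ⟨(h _ hne.some_mem).1, fun hα => (h α hα).2 rfl⟩⟩

theorem mk_eq_of_mem (hκ : ℵ₀ < κ) {X : Set Ordinal} (hX : X ∈ D.sets) :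
    #X = lift.{1} κ := by
  refine (mk_le_lift_of_subset_Iio_ord (D.mem_subset X hX)).antisymm (not_lt.1 fun hlt => ?_)
  have := D.inter_mem hκ hX (D.Iio_diff_mem hlt)
  rw [inter_sdiff_self] at this
  exact D.empty_not_mem this

theorem isRegular (D : NormalUltrafilterOn κ) (hκ : ℵ₀ < κ) : κ.IsRegular := by
  rw [← isRegular_lift_iff.{1}]
  refine ⟨aleph0_le_lift.2 hκ.le, ?_⟩
  rw [← lift_ord, ← Ordinal.cof_Iio, le_cof_iff]
  intro s hs
  by_contra! hlt
  have : Nonempty s := by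
    obtain ⟨ξ, hξ, -⟩ := hs ⟨0, (isSuccLimit_ord hκ.le).pos⟩
    exact ⟨⟨ξ, hξ⟩⟩
  have hmem := D.iInter_mem hlt fun ξ : s =>
    D.Iio_diff_mem (mk_Iic_lt_lift_of_lt_ord hκ.le (ξ : Iio κ.ord).2)
  obtain ⟨α, hα⟩ := D.nonempty_of_mem hmem
  rw [mem_iInter] at hα
  have hακ : α < κ.ord := (hα (Classical.arbitrary s)).1
  obtain ⟨ξ, hξ, hαξ⟩ := hs ⟨α, hακ⟩
  exact (hα ⟨ξ, hξ⟩).2 hαξ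

theorem diagInter_mem (hκ : ℵ₀ < κ) {g : Ordinal → Set Ordinal}
    (hg : ∀ i < κ.ord, g i ∈ D.sets) : diagInter κ.ord g ∈ D.sets := by
  by_contra hΔ
  set Z := Iio κ.ord \ diagInter κ.ord g
  have hZ : Z ∈ D.sets := (D.ultra _ fun α h => h.1).resolve_left hΔ
  -- `f` is regressive on `Z`, so normality makes it constant on a set in `D`
  let f α := sInf {i | α ∉ g i}
  have hf : ∀ α ∈ Z, f α < α ∧ α ∉ g (f α) := by
    rintro α ⟨hα, hαΔ⟩
    obtain ⟨i, hi, hαi⟩ : ∃ i < α, α ∉ g i := by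
      by_contra! h
      exact hαΔ ⟨hα, h⟩
    exact ⟨(csInf_le' hαi).trans_lt hi, csInf_mem (s := {i | α ∉ g i}) ⟨i, hαi⟩⟩
  obtain ⟨B, hB, γ, hγ⟩ := D.normal f Z hZ fun α hα => (hf α hα).1
  have hBZ := D.inter_mem hκ hB hZ
  obtain ⟨α, hαB, hαZ⟩ := D.nonempty_of_mem hBZ
  have hγκ : γ < κ.ord := hγ α hαB ▸ (hf α hαZ).1.trans hαZ.1
  obtain ⟨β, ⟨hβB, hβZ⟩, hβg⟩ := D.nonempty_of_mem (D.inter_mem hκ hBZ (hg γ hγκ))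
  exact (hf β hβZ).2 (hγ β hβB ▸ hβg)

end NormalUltrafilterOn

structure IsAlmostDisjointSeq (κ : Cardinal.{0}) (A : Ordinal → Set Ordinal) : Prop where
  subset_Iio : ∀ i < κ.ord, A i ⊆ Iio κ.ord
  mk_eq : ∀ i < κ.ord, #(A i) = lift.{1} κ
  mk_inter_lt : ∀ i < κ.ord, ∀ j < i, #(A i ∩ A j : Set Ordinal) < lift.{1} κ

namespace IsAlmostDisjointSeq

variable {κ : Cardinal.{0}} {A : Ordinal → Set Ordinal}

theorem of_forall_mem {B : Set (Set Ordinal)} (hBsub : ∀ C ∈ B, C ⊆ Iio κ.ord)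
    (hBcard : ∀ C ∈ B, #C = lift.{1} κ)
    (hBad : ∀ C ∈ B, ∀ C' ∈ B, C ≠ C' → #(C ∩ C' : Set Ordinal) < lift.{1} κ)
    (hA : ∀ i < κ.ord, A i ∈ B) (hAinj : ∀ i < κ.ord, ∀ j < κ.ord, i ≠ j → A i ≠ A j) :
    IsAlmostDisjointSeq κ A where
  subset_Iio i hi := hBsub _ (hA i hi)
  mk_eq i hi := hBcard _ (hA i hi)
  mk_inter_lt i hi j hj :=
    hBad _ (hA i hi) _ (hA j (hj.trans hi)) (hAinj i hi j (hj.trans hi) hj.ne')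

theorem fseq_lt (hA : IsAlmostDisjointSeq κ A) (hκ : κ.IsRegular) {i : Ordinal} (hi : i < κ.ord)
    (α : Ordinal) : Fseq A i α < κ.ord :=
  enumOrd_lt_of_subset_Iio hκ.ord_pos (fun _ hx => hA.subset_Iio i hi hx.1) α

theorem strictMonoOn_fseq (hA : IsAlmostDisjointSeq κ A) (hκ : κ.IsRegular) {i : Ordinal}
    (hi : i < κ.ord) : StrictMonoOn (Fseq A i) (Iio κ.ord) :=
  strictMonoOn_enumOrd_of_mk_eq hκ (fun _ hx => hA.subset_Iio i hi hx.1)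
    (mk_diff_biUnion_eq hκ hi (hA.mk_eq i hi) (hA.mk_inter_lt i hi))

end IsAlmostDisjointSeq

theorem sset_mono (A : Ordinal → Set Ordinal) : Monotone (Sset A) := by
  rintro C C' h _ ⟨i, α, hi, hα, hiα, rfl⟩
  exact ⟨i, α, h hi, h hα, hiα, rfl⟩

section Eset

variable {κ : Cardinal.{0}} (D : NormalUltrafilterOn κ) {A : Ordinal → Set Ordinal}

theorem lift_le_mk_sset (hκ : ℵ₀ < κ) (hA : IsAlmostDisjointSeq κ A) {C : Set Ordinal}
    (hC : C ∈ D.sets) : lift.{1} κ ≤ #(Sset A C) := by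
  obtain ⟨i, hiC⟩ := D.nonempty_of_mem hC
  have hi : i < κ.ord := D.mem_subset C hC hiC
  set C' := C ∩ (Iio κ.ord \ Iic i)
  have hC' : C' ∈ D.sets :=
    D.inter_mem hκ hC (D.Iio_diff_mem (mk_Iic_lt_lift_of_lt_ord hκ.le hi))
  have hinj : InjOn (Fseq A i) C' :=
    (hA.strictMonoOn_fseq (D.isRegular hκ) hi).injOn.mono fun _ hα => hα.2.1
  calc lift.{1} κ = #C' := (D.mk_eq_of_mem hκ hC').symm
    _ = #(Fseq A i '' C') := (mk_image_eq_of_injOn _ _ hinj).symm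
    _ ≤ #(Sset A C) := by
      refine mk_le_mk_of_subset ?_
      rintro _ ⟨α, ⟨hαC, -, hiα⟩, rfl⟩
      exact ⟨i, α, hiC, hαC, not_le.1 hiα, rfl⟩

theorem mk_eq_of_mem_eset (hκ : ℵ₀ < κ) (hA : IsAlmostDisjointSeq κ A) {Y : Set Ordinal}
    (hY : Y ∈ Eset κ D A) : #Y = lift.{1} κ := by
  obtain ⟨hYκ, C, hC, hCY⟩ := hY
  exact (mk_le_lift_of_subset_Iio_ord hYκ).antisymm
    ((lift_le_mk_sset D hκ hA hC).trans (mk_le_mk_of_subset hCY))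

theorem empty_not_mem_eset (hκ : ℵ₀ < κ) (hA : IsAlmostDisjointSeq κ A) :
    ∅ ∉ Eset κ D A :=
  fun h => (aleph0_pos.trans hκ).ne (by simpa using mk_eq_of_mem_eset D hκ hA h)

theorem mem_eset_of_forall_mem (hκ : ℵ₀ < κ) {Y W : Set Ordinal} (hY : Y ⊆ Iio κ.ord)
    (hW : W ∈ D.sets) (hWY : ∀ i ∈ W, {α | α < κ.ord ∧ Fseq A i α ∈ Y} ∈ D.sets) :
    Y ∈ Eset κ D A := by
  classical
  let g i := if i ∈ W then {α | α < κ.ord ∧ Fseq A i α ∈ Y} else Iio κ.ord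
  have hg : ∀ i < κ.ord, g i ∈ D.sets := by
    intro i _
    by_cases hi : i ∈ W
    · simpa only [g, if_pos hi] using hWY i hi
    · simpa only [g, if_neg hi] using D.univ_mem
  refine ⟨hY, W ∩ diagInter κ.ord g, D.inter_mem hκ hW (D.diagInter_mem hκ hg), ?_⟩
  rintro _ ⟨i, α, ⟨hiW, -⟩, ⟨-, -, hα⟩, hiα, rfl⟩
  have hαg := hα i hiα
  simp only [g, if_pos hiW] at hαg
  exact hαg.2

theorem mem_eset_or_Iio_diff_mem_eset (hκ : ℵ₀ < κ) (hA : IsAlmostDisjointSeq κ A)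
    {Y : Set Ordinal} (hY : Y ⊆ Iio κ.ord) :
    Y ∈ Eset κ D A ∨ Iio κ.ord \ Y ∈ Eset κ D A := by
  let Yi i := {α | α < κ.ord ∧ Fseq A i α ∈ Y}
  rcases D.ultra {i | i < κ.ord ∧ Yi i ∈ D.sets} fun i hi => hi.1 with hW | hW
  · exact .inl (mem_eset_of_forall_mem D hκ hY hW fun i hi => hi.2)
  refine .inr (mem_eset_of_forall_mem D hκ sdiff_subset hW fun i ⟨hi, hiW⟩ => ?_)
  have hYi : Iio κ.ord \ Yi i ∈ D.sets :=
    (D.ultra (Yi i) fun _ hα => hα.1).resolve_left fun h => hiW ⟨hi, h⟩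
  convert hYi using 1
  ext α
  have := hA.fseq_lt (D.isRegular hκ) hi α
  simp only [Yi, mem_ofPred_eq, mem_sdiff, mem_Iio]
  tauto

theorem sInter_mem_eset {T : Set (Set Ordinal)} (hT : T ⊆ Eset κ D A) (hTne : T.Nonempty)
    (hTcard : #T < lift.{1} κ) : ⋂₀ T ∈ Eset κ D A := by
  choose C hCD hCY using fun Y : T => (hT Y.2).2
  have : Nonempty T := hTne.to_subtype
  refine ⟨(sInter_subset_of_mem hTne.some_mem).trans (hT hTne.some_mem).1, ⋂ Y, C Y,
    D.iInter_mem hTcard hCD, subset_sInter fun Y hY => ?_⟩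
  exact (sset_mono A (iInter_subset C ⟨Y, hY⟩)).trans (hCY ⟨Y, hY⟩)

theorem Iio_diff_singleton_mem_eset (hκ : ℵ₀ < κ) (hA : IsAlmostDisjointSeq κ A)
    (β : Ordinal) : Iio κ.ord \ {β} ∈ Eset κ D A := by
  have hβ : Iio κ.ord ∩ {β} ∉ Eset κ D A := fun h => by
    have := (mk_eq_of_mem_eset D hκ hA h).symm.trans_le
      ((mk_le_mk_of_subset inter_subset_right).trans_eq (mk_singleton β))
    exact (one_lt_aleph0.trans_le (aleph0_le_lift.2 hκ.le)).not_ge this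
  simpa using (mem_eset_or_Iio_diff_mem_eset D hκ hA inter_subset_left).resolve_left hβ

end Eset

theorem stmt9 (κ : Cardinal.{0}) (hκ : Cardinal.aleph0 < κ) (D : NormalUltrafilterOn κ)
    -- `Bfam` is a κ-almost disjoint family on κ:
    (Bfam : Set (Set Ordinal))
    (hBsub : ∀ C ∈ Bfam, C ⊆ Set.Iio κ.ord)
    (hBcard : ∀ C ∈ Bfam, Cardinal.mk C = Cardinal.lift.{1} κ)
    (hBad : ∀ C ∈ Bfam, ∀ C' ∈ Bfam, C ≠ C' →
      Cardinal.mk ↥(C ∩ C') < Cardinal.lift.{1} κ)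
    -- `(A i : i < κ)` is a sequence of pairwise distinct members of `Bfam`:
    (A : Ordinal → Set Ordinal) (hA : ∀ i < κ.ord, A i ∈ Bfam)
    (hAinj : ∀ i < κ.ord, ∀ j < κ.ord, i ≠ j → A i ≠ A j)
    :
    -- `E` is a κ-complete nonprincipal ultrafilter on κ all of whose members
    -- have cardinality κ:
    (∅ ∉ Eset κ D A) ∧
    (∀ Y Z : Set Ordinal, Y ∈ Eset κ D A → Y ⊆ Z → Z ⊆ Set.Iio κ.ord →
      Z ∈ Eset κ D A) ∧
    (∀ Y : Set Ordinal, Y ⊆ Set.Iio κ.ord →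
      Y ∈ Eset κ D A ∨ (Set.Iio κ.ord \ Y) ∈ Eset κ D A) ∧
    (∀ T : Set (Set Ordinal), T ⊆ Eset κ D A → T.Nonempty →
      Cardinal.mk T < Cardinal.lift.{1} κ → ⋂₀ T ∈ Eset κ D A) ∧
    (∀ β : Ordinal, (Set.Iio κ.ord \ {β}) ∈ Eset κ D A) ∧
    (∀ Y ∈ Eset κ D A, Cardinal.mk Y = Cardinal.lift.{1} κ) := by
  have hA' := IsAlmostDisjointSeq.of_forall_mem hBsub hBcard hBad hA hAinj
  exact ⟨empty_not_mem_eset D hκ hA',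
    fun Y Z ⟨_, C, hC, hCY⟩ hYZ hZ => ⟨hZ, C, hC, hCY.trans hYZ⟩,
    fun Y hY => mem_eset_or_Iio_diff_mem_eset D hκ hA' hY,
    fun T hT hTne hTcard => sInter_mem_eset D hT hTne hTcard,
    Iio_diff_singleton_mem_eset D hκ hA',
    fun Y hY => mk_eq_of_mem_eset D hκ hA' hY⟩
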